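/- arXiv:2512.16682 — 4 statements merged into one kernel-verified Lean document; each statement's English description precedes it below -/
import Mathlib

section
/- Let λ̂₁, λ̂₂ ∈ ℝ³ be unit vectors with λ̂₁·λ̂₂ ∉ {-1, 0, 1}, and let V₁, V₂ ∈ ℝ³ satisfy V₁·λ̂₁ = 0 and V₂·λ̂₂ = 0. If for every u ∈ ℝ³ one has (λ̂₂·u)(V₁·u) + (λ̂₁·u)(V₂·u) = 0, then V₁ = 0 and V₂ = 0. -/
/-!
The hypothesis says that the quadratic form `u ↦ ⟪l₂, u⟫⟪V₁, u⟫ + ⟪l₁, u⟫⟪V₂, u⟫` vanishes, so by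
polarization the symmetric tensor `l₂ ⊗ V₁ + V₁ ⊗ l₂ + l₁ ⊗ V₂ + V₂ ⊗ l₁` vanishes. Contracting it
with `l₂`, and using `V₂ ⊥ l₂` together with `⟪V₁, l₂⟫ = 0` (the form evaluated at `l₂`), gives
`V₁ + c V₂ = 0`, where `c = ⟪l₁, l₂⟫`; by symmetry `c V₁ + V₂ = 0`. Since `c² ≠ 1` this linear
system forces `V₁ = V₂ = 0`.
-/

open scoped RealInnerProductSpace

section

variable {E : Type*} [NormedAddCommGroup E] [InnerProductSpace ℝ E]

theorem smul_add_smul_add_smul_add_smul_eq_zero_of_forall_inner_mul_inner_add {a x b y : E}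
    (h : ∀ u : E, ⟪a, u⟫ * ⟪x, u⟫ + ⟪b, u⟫ * ⟪y, u⟫ = 0) (u : E) :
    ⟪a, u⟫ • x + ⟪x, u⟫ • a + ⟪b, u⟫ • y + ⟪y, u⟫ • b = 0 := by
  refine ext_inner_right ℝ fun v => ?_
  simp only [inner_add_left, real_inner_smul_left, inner_zero_left]
  have huv := h (u + v)
  simp only [inner_add_right] at huv
  linear_combination huv - h u - h v

theorem add_inner_smul_eq_zero_of_forall_inner_mul_inner_add {l₁ l₂ V₁ V₂ : E} (hl₂ : ‖l₂‖ = 1)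
    (hV₂ : ⟪V₂, l₂⟫ = 0) (h : ∀ u : E, ⟪l₂, u⟫ * ⟪V₁, u⟫ + ⟪l₁, u⟫ * ⟪V₂, u⟫ = 0) :
    V₁ + ⟪l₁, l₂⟫ • V₂ = 0 := by
  have hl₂l₂ : ⟪l₂, l₂⟫ = 1 := inner_self_eq_one_of_norm_eq_one hl₂
  have hV₁ : ⟪V₁, l₂⟫ = 0 := by simpa only [hl₂l₂, hV₂, one_mul, mul_zero, add_zero] using h l₂
  simpa only [hl₂l₂, hV₁, hV₂, one_smul, zero_smul, add_zero] using
    smul_add_smul_add_smul_add_smul_eq_zero_of_forall_inner_mul_inner_add h l₂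

end

theorem eq_zero_and_eq_zero_of_add_smul_eq_zero {K M : Type*} [Field K] [AddCommGroup M]
    [Module K M] {c : K} (hc : c ^ 2 ≠ 1) {x y : M} (hxy : x + c • y = 0) (hyx : y + c • x = 0) :
    x = 0 ∧ y = 0 := by
  have hy : (1 - c ^ 2) • y = 0 := by
    linear_combination (norm := module) hyx - c • hxy
  have hy : y = 0 := (smul_eq_zero.mp hy).resolve_left (sub_ne_zero.mpr hc.symm)
  exact ⟨by simpa [hy] using hxy, hy⟩

/-- If `λ̂₁, λ̂₂` are unit vectors in ℝ³ with `λ̂₁·λ̂₂ ∉ {-1,0,1}`, and `V₁ ⊥ λ̂₁`, `V₂ ⊥ λ̂₂`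
satisfy `(λ̂₂·u)(V₁·u) + (λ̂₁·u)(V₂·u) = 0` for all `u`, then `V₁ = 0` and `V₂ = 0`. -/
theorem stmt_4 (l₁ l₂ V₁ V₂ : EuclideanSpace ℝ (Fin 3))
    (hl₁ : ‖l₁‖ = 1) (hl₂ : ‖l₂‖ = 1)
    (hdot : ⟪l₁, l₂⟫ ∉ ({-1, 0, 1} : Set ℝ))
    (hV₁ : ⟪V₁, l₁⟫ = 0) (hV₂ : ⟪V₂, l₂⟫ = 0)
    (h : ∀ u : EuclideanSpace ℝ (Fin 3), ⟪l₂, u⟫ * ⟪V₁, u⟫ + ⟪l₁, u⟫ * ⟪V₂, u⟫ = 0) :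
    V₁ = 0 ∧ V₂ = 0 := by
  have hc : ⟪l₁, l₂⟫ ^ 2 ≠ 1 := fun hsq => hdot <| by
    rcases sq_eq_one_iff.mp hsq with hc | hc <;> simp [hc]
  have h₁ := add_inner_smul_eq_zero_of_forall_inner_mul_inner_add hl₂ hV₂ h
  have h₂ := add_inner_smul_eq_zero_of_forall_inner_mul_inner_add hl₁ hV₁
    fun u => (add_comm _ _).trans (h u)
  rw [real_inner_comm] at h₂
  exact eq_zero_and_eq_zero_of_add_smul_eq_zero hc h₁ h₂
end

section
/- Let λ̂₁, λ̂₂ ∈ ℝ³ be unit vectors with λ̂₁ ≠ λ̂₂ and λ̂₁ ≠ -λ̂₂, and let V₁, V₂ ∈ ℝ³ satisfy V₁·λ̂₁ = 0, V₂·λ̂₂ = 0, and (λ̂₂·u)(V₁·u) + (λ̂₁·u)(V₂·u) = 0 for all u ∈ ℝ³. Then V₁·λ̂₂ = 0 and V₂·λ̂₁ = 0, and consequently there exist scalars v₁, v₂ ∈ ℝ such that V₁ = v₁ (λ̂₁ × λ̂₂)/‖λ̂₁ × λ̂₂‖ and V₂ = v₂ (λ̂₁ × λ̂₂)/‖λ̂₁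 × λ̂₂‖. -/
open scoped RealInnerProductSpace

/-- The cross product on Euclidean ℝ³. -/
noncomputable def cross3 (a b : EuclideanSpace ℝ (Fin 3)) : EuclideanSpace ℝ (Fin 3) :=
  (EuclideanSpace.equiv (Fin 3) ℝ).symm
    (crossProduct (EuclideanSpace.equiv (Fin 3) ℝ a) (EuclideanSpace.equiv (Fin 3) ℝ b))

lemma cross3_apply (a b : EuclideanSpace ℝ (Fin 3)) :
    cross3 a b 0 = a 1 * b 2 - a 2 * b 1 ∧
    cross3 a b 1 = a 2 * b 0 - a 0 * b 2 ∧
    cross3 a b 2 = a 0 * b 1 - a 1 * b 0 := by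
  simp [cross3, crossProduct, EuclideanSpace.equiv]

lemma inner3 (a b : EuclideanSpace ℝ (Fin 3)) :
    ⟪a, b⟫ = a 0 * b 0 + a 1 * b 1 + a 2 * b 2 := by
  simp [PiLp.inner_apply, Fin.sum_univ_three, mul_comm]

lemma norm_cross3_sq (a b : EuclideanSpace ℝ (Fin 3)) :
    ‖cross3 a b‖ ^ 2
      = (cross3 a b 0) ^ 2 + (cross3 a b 1) ^ 2 + (cross3 a b 2) ^ 2 := by
  rw [← real_inner_self_eq_norm_sq, inner3]; ring

/-- A vector orthogonal to `a` and `b` is a multiple of `a × b` (as a polynomial identity). -/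
lemma key (a b V : EuclideanSpace ℝ (Fin 3)) (h1 : ⟪V, a⟫ = 0) (h2 : ⟪V, b⟫ = 0) :
    (‖cross3 a b‖ ^ 2) • V = ⟪V, cross3 a b⟫ • cross3 a b := by
  obtain ⟨c0, c1, c2⟩ := cross3_apply a b
  rw [inner3] at h1 h2
  have hn := norm_cross3_sq a b
  ext i
  fin_cases i <;>
    simp only [Fin.zero_eta, Fin.mk_one, Fin.reduceFinMk, PiLp.smul_apply, smul_eq_mul,
      hn, inner3, c0, c1, c2] <;>
    [(linear_combination (-((a 2 * b 0 - a 0 * b 2) * b 2 - (a 0 * b 1 - a 1 * b 0) * b 1)) * h1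
        + ((a 2 * b 0 - a 0 * b 2) * a 2 - (a 0 * b 1 - a 1 * b 0) * a 1) * h2);
     (linear_combination (-((a 0 * b 1 - a 1 * b 0) * b 0 - (a 1 * b 2 - a 2 * b 1) * b 2)) * h1
        + ((a 0 * b 1 - a 1 * b 0) * a 0 - (a 1 * b 2 - a 2 * b 1) * a 2) * h2);
     (linear_combination (-((a 1 * b 2 - a 2 * b 1) * b 1 - (a 2 * b 0 - a 0 * b 2) * b 0)) * h1
        + ((a 1 * b 2 - a 2 * b 1) * a 1 - (a 2 * b 0 - a 0 * b 2) * a 0) * h2)]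

/-- If `λ̂₁, λ̂₂` are unit vectors in ℝ³ with `λ̂₁ ≠ ±λ̂₂`, and `V₁ ⊥ λ̂₁`, `V₂ ⊥ λ̂₂` satisfy
`(λ̂₂·u)(V₁·u) + (λ̂₁·u)(V₂·u) = 0` for all `u`, then `V₁·λ̂₂ = 0` and `V₂·λ̂₁ = 0`, and both
`V₁` and `V₂` are multiples of the unit vector `(λ̂₁ × λ̂₂)/‖λ̂₁ × λ̂₂‖`. -/
theorem stmt_5 (l₁ l₂ V₁ V₂ : EuclideanSpace ℝ (Fin 3))
    (hl₁ : ‖l₁‖ = 1) (hl₂ : ‖l₂‖ = 1)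
    (hne : l₁ ≠ l₂) (hne' : l₁ ≠ -l₂)
    (hV₁ : ⟪V₁, l₁⟫ = 0) (hV₂ : ⟪V₂, l₂⟫ = 0)
    (h : ∀ u : EuclideanSpace ℝ (Fin 3), ⟪l₂, u⟫ * ⟪V₁, u⟫ + ⟪l₁, u⟫ * ⟪V₂, u⟫ = 0) :
    ⟪V₁, l₂⟫ = 0 ∧ ⟪V₂, l₁⟫ = 0 ∧
    ∃ v₁ v₂ : ℝ, V₁ = v₁ • (‖cross3 l₁ l₂‖⁻¹ • cross3 l₁ l₂) ∧
      V₂ = v₂ • (‖cross3 l₁ l₂‖⁻¹ • cross3 l₁ l₂) := by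
  have hne2 : ∀ u : EuclideanSpace ℝ (Fin 3), ⟪u, u⟫ = ‖u‖ ^ 2 := fun u =>
    real_inner_self_eq_norm_sq u
  -- V₁ ⊥ l₂
  have h1 : ⟪V₁, l₂⟫ = 0 := by
    have := h l₂
    rw [hne2 l₂, hl₂, hV₂] at this
    norm_num at this
    exact this
  have h2 : ⟪V₂, l₁⟫ = 0 := by
    have := h l₁
    rw [hne2 l₁, hl₁, hV₁] at this
    norm_num at this
    exact this
  refine ⟨h1, h2, ?_⟩
  -- cross product is nonzero
  have hip1 : ⟪l₁, l₂⟫ ≠ 1 := fun hc => hne ((inner_eq_one_iff_of_norm_eq_one hl₁ hl₂).mp hc)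
  have hip2 : ⟪l₁, l₂⟫ ≠ -1 := by
    intro hc
    apply hne'
    have hl₂' : ‖-l₂‖ = 1 := by rwa [norm_neg]
    exact (inner_eq_one_iff_of_norm_eq_one hl₁ hl₂').mp (by rw [inner3] at hc ⊢; simp only [PiLp.neg_apply]; linarith)
  have hlag : ‖cross3 l₁ l₂‖ ^ 2 = 1 - ⟪l₁, l₂⟫ ^ 2 := by
    obtain ⟨c0, c1, c2⟩ := cross3_apply l₁ l₂
    have e1 : ⟪l₁, l₁⟫ = 1 := by rw [hne2, hl₁]; norm_num
    have e2 : ⟪l₂, l₂⟫ = 1 := by rw [hne2, hl₂]; norm_num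
    rw [inner3] at e1 e2
    rw [norm_cross3_sq, inner3, c0, c1, c2]
    nlinarith [e1, e2]
  have habs : |⟪l₁, l₂⟫| ≤ 1 := by
    have := abs_real_inner_le_norm l₁ l₂
    rwa [hl₁, hl₂, mul_one] at this
  have hNpos : (0:ℝ) < ‖cross3 l₁ l₂‖ ^ 2 := by
    rw [hlag]
    rcases abs_le.mp habs with ⟨hlo, hhi⟩
    rcases lt_or_eq_of_le hhi with hlt | heq
    · rcases lt_or_eq_of_le hlo with hlt2 | heq2
      · nlinarith
      · exact absurd heq2.symm hip2
    · exact absurd heq hip1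
  have hNne : ‖cross3 l₁ l₂‖ ^ 2 ≠ 0 := ne_of_gt hNpos
  have hV₁eq := key l₁ l₂ V₁ hV₁ h1
  have hV₂eq := key l₁ l₂ V₂ h2 hV₂
  refine ⟨⟪V₁, cross3 l₁ l₂⟫ / ‖cross3 l₁ l₂‖, ⟪V₂, cross3 l₁ l₂⟫ / ‖cross3 l₁ l₂‖, ?_, ?_⟩
  · have hs : ⟪V₁, cross3 l₁ l₂⟫ / ‖cross3 l₁ l₂‖ * ‖cross3 l₁ l₂‖⁻¹
        = (‖cross3 l₁ l₂‖ ^ 2)⁻¹ * ⟪V₁, cross3 l₁ l₂⟫ := by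
      rw [div_eq_mul_inv, sq, mul_inv]
      ring
    rw [smul_smul, hs, mul_smul, ← hV₁eq, smul_smul, inv_mul_cancel₀ hNne, one_smul]
  · have hs : ⟪V₂, cross3 l₁ l₂⟫ / ‖cross3 l₁ l₂‖ * ‖cross3 l₁ l₂‖⁻¹
        = (‖cross3 l₁ l₂‖ ^ 2)⁻¹ * ⟪V₂, cross3 l₁ l₂⟫ := by
      rw [div_eq_mul_inv, sq, mul_inv]
      ring
    rw [smul_smul, hs, mul_smul, ← hV₂eq, smul_smul, inv_mul_cancel₀ hNne, one_smul]
end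

section
/- Let λ̂₁, λ̂₂ ∈ ℝ³ be unit vectors, and let V₁, V₂ ∈ ℝ³ satisfy V₁·λ̂₁ = 0, V₂·λ̂₂ = 0, and (λ̂₂·u)(V₁·u) + (λ̂₁·u)(V₂·u) = 0 for all u ∈ ℝ³. Then V₁·V₂ + (λ̂₁·λ̂₂)‖V₁‖² = 0 and V₁·V₂ + (λ̂₁·λ̂₂)‖V₂‖² = 0; in particular, if λ̂₁·λ̂₂ ≠ 0 then ‖V₁‖ = ‖V₂‖. -/
open scoped RealInnerProductSpace

/-! Testing the quadratic identity at `u = l₂` and `u = l₁` gives the cross orthogonality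
`V₁ ⊥ l₂`, `V₂ ⊥ l₁`; with these, testing it at `u = l₁ + V₁` and `u = l₂ + V₂` leaves exactly
the two stated relations. -/

section QuadraticIdentity

variable {E : Type*} [NormedAddCommGroup E] [InnerProductSpace ℝ E] {l₁ l₂ V₁ V₂ : E}

theorem inner_eq_zero_of_forall_inner_mul_inner_add_eq_zero
    (h : ∀ u, ⟪l₂, u⟫ * ⟪V₁, u⟫ + ⟪l₁, u⟫ * ⟪V₂, u⟫ = 0)
    (hV₂ : ⟪V₂, l₂⟫ = 0) (hl₂ : l₂ ≠ 0) : ⟪V₁, l₂⟫ = 0 := by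
  have hl₂l₂ : ⟪l₂, l₂⟫ ≠ 0 := inner_self_ne_zero.2 hl₂
  have := h l₂
  rw [hV₂, mul_zero, add_zero] at this
  exact (mul_eq_zero.1 this).resolve_left hl₂l₂

theorem norm_sq_mul_inner_add_inner_mul_norm_sq_eq_zero
    (h : ∀ u, ⟪l₂, u⟫ * ⟪V₁, u⟫ + ⟪l₁, u⟫ * ⟪V₂, u⟫ = 0)
    (hV₁ : ⟪V₁, l₁⟫ = 0) (hV₂ : ⟪V₂, l₂⟫ = 0) (hl₁ : l₁ ≠ 0) (hl₂ : l₂ ≠ 0) :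
    ‖l₁‖ ^ 2 * ⟪V₁, V₂⟫ + ⟪l₁, l₂⟫ * ‖V₁‖ ^ 2 = 0 := by
  have hV₁l₂ : ⟪V₁, l₂⟫ = 0 :=
    inner_eq_zero_of_forall_inner_mul_inner_add_eq_zero h hV₂ hl₂
  have hV₂l₁ : ⟪V₂, l₁⟫ = 0 :=
    inner_eq_zero_of_forall_inner_mul_inner_add_eq_zero
      (fun u => (add_comm _ _).trans (h u)) hV₁ hl₁
  have := h (l₁ + V₁)
  simp only [inner_add_right, real_inner_self_eq_norm_sq] at this
  rw [real_inner_comm V₁ l₂, real_inner_comm V₁ l₁, real_inner_comm l₁ l₂,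
    real_inner_comm V₁ V₂, hV₁, hV₁l₂, hV₂l₁] at this
  linarith

end QuadraticIdentity

/-- For unit vectors `λ̂₁, λ̂₂ ∈ ℝ³` and `V₁ ⊥ λ̂₁`, `V₂ ⊥ λ̂₂` with
`(λ̂₂·u)(V₁·u) + (λ̂₁·u)(V₂·u) = 0` for all `u`, one has
`V₁·V₂ + (λ̂₁·λ̂₂)‖V₁‖² = 0` and `V₁·V₂ + (λ̂₁·λ̂₂)‖V₂‖² = 0`; in particular, if
`λ̂₁·λ̂₂ ≠ 0` then `‖V₁‖ = ‖V₂‖`. -/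
theorem stmt_6 (l₁ l₂ V₁ V₂ : EuclideanSpace ℝ (Fin 3))
    (hl₁ : ‖l₁‖ = 1) (hl₂ : ‖l₂‖ = 1)
    (hV₁ : ⟪V₁, l₁⟫ = 0) (hV₂ : ⟪V₂, l₂⟫ = 0)
    (h : ∀ u : EuclideanSpace ℝ (Fin 3), ⟪l₂, u⟫ * ⟪V₁, u⟫ + ⟪l₁, u⟫ * ⟪V₂, u⟫ = 0) :
    ⟪V₁, V₂⟫ + ⟪l₁, l₂⟫ * ‖V₁‖ ^ 2 = 0 ∧
    ⟪V₁, V₂⟫ + ⟪l₁, l₂⟫ * ‖V₂‖ ^ 2 = 0 ∧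
    (⟪l₁, l₂⟫ ≠ 0 → ‖V₁‖ = ‖V₂‖) := by
  have hl₁₀ : l₁ ≠ 0 := norm_ne_zero_iff.1 (by simp [hl₁])
  have hl₂₀ : l₂ ≠ 0 := norm_ne_zero_iff.1 (by simp [hl₂])
  have e₁ := norm_sq_mul_inner_add_inner_mul_norm_sq_eq_zero h hV₁ hV₂ hl₁₀ hl₂₀
  have e₂ := norm_sq_mul_inner_add_inner_mul_norm_sq_eq_zero
    (fun u => (add_comm _ _).trans (h u)) hV₂ hV₁ hl₂₀ hl₁₀
  rw [hl₁, one_pow, one_mul] at e₁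
  rw [hl₂, one_pow, one_mul, real_inner_comm V₁ V₂, real_inner_comm l₁ l₂] at e₂
  refine ⟨e₁, e₂, fun hl₁l₂ => ?_⟩
  have hsq : ‖V₁‖ ^ 2 = ‖V₂‖ ^ 2 := mul_left_cancel₀ hl₁l₂ (by linarith)
  exact (pow_left_inj₀ (norm_nonneg _) (norm_nonneg _) two_ne_zero).1 hsq
end

section
/- Let σ₁, σ₂, σ₃ ∈ Matrix (Fin 2) (Fin 2) ℂ be the Pauli matrices, and for r ∈ ℝ³ define ρ(r) := (1/2)(I₂ + r₁σ₁ + r₂σ₂ + r₃σ₃). Let a, b ∈ ℝ³, let {û₁,û₂,û₃} and {v̂₁,v̂₂,v̂₃} be orthonormal bases of ℝ³, let S₁,S₂,S₃ ≥ 0, and set T := Σⱼ Sⱼ ûⱼ v̂ⱼᵀ ∈ Matrix (Fin 3) (Fin 3) ℝ. Then, with ⊗ the Kronecker product, (1/4)(I₂⊗I₂ + Σⱼ aⱼ σⱼ⊗I₂ + Σⱼ bⱼ I₂⊗σⱼ + Σ_{j,k} T_{jk} σⱼ⊗σₖ) = Σⱼ (Sⱼ/2)(ρ(ûⱼ)⊗ρ(v̂ⱼ)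 + ρ(-ûⱼ)⊗ρ(-v̂ⱼ)) + (1/2)(‖a‖I₂ + Σⱼ aⱼσⱼ)⊗((1/2)I₂) + ((1/2)I₂)⊗(1/2)(‖b‖I₂ + Σⱼ bⱼσⱼ) + (1 - ‖a‖ - ‖b‖ - Σⱼ Sⱼ)·(1/4)(I₂⊗I₂). -/
open Kronecker
open scoped RealInnerProductSpace

noncomputable section

/-- The Pauli matrices `σ₁, σ₂, σ₃` (indexed here by `0, 1, 2`). -/
def pauli : Fin 3 → Matrix (Fin 2) (Fin 2) ℂ
  | 0 => !![0, 1; 1, 0]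
  | 1 => !![0, -Complex.I; Complex.I, 0]
  | 2 => !![1, 0; 0, -1]

/-- The qubit state `ρ(r) = (1/2)(I₂ + r·σ)` with Bloch vector `r ∈ ℝ³`. -/
def qubitState (r : EuclideanSpace ℝ (Fin 3)) : Matrix (Fin 2) (Fin 2) ℂ :=
  (1 / 2 : ℂ) • ((1 : Matrix (Fin 2) (Fin 2) ℂ) + ∑ j, (r j : ℂ) • pauli j)

/-!
The decomposition is an identity of matrices. Writing `r·σ = Σⱼ rⱼσⱼ`, the cross terms of
`ρ(u) ⊗ ρ(v) + ρ(-u) ⊗ ρ(-v)` cancel, leaving `½(I ⊗ I + (u·σ) ⊗ (v·σ))`; by bilinearity of `⊗ₖ`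
the singular value decomposition turns `Σⱼₖ Tⱼₖ σⱼ ⊗ σₖ` into `Σₗ Sₗ (ûₗ·σ) ⊗ (v̂ₗ·σ)`, so the
`Sⱼ`-weighted antipodal pairs reproduce the correlation part, and the multiples `‖a‖`, `‖b‖`,
`Σⱼ Sⱼ` of `I ⊗ I` they and the local terms introduce are removed by the last summand.
-/

namespace Matrix

variable {ι l m n p α : Type*}

theorem sum_kronecker [NonUnitalNonAssocSemiring α] (s : Finset ι) (A : ι → Matrix l m α)
    (B : Matrix n p α) : (∑ i ∈ s, A i) ⊗ₖ B = ∑ i ∈ s, A i ⊗ₖ B := by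
  ext
  simp [sum_apply, Finset.sum_mul]

theorem kronecker_sum [NonUnitalNonAssocSemiring α] (s : Finset ι) (A : Matrix l m α)
    (B : ι → Matrix n p α) : A ⊗ₖ (∑ i ∈ s, B i) = ∑ i ∈ s, A ⊗ₖ B i := by
  ext
  simp [sum_apply, Finset.mul_sum]

theorem add_kronecker_add_add_sub_kronecker_sub [Ring α] (P X : Matrix l m α)
    (Q Y : Matrix n p α) :
    (P + X) ⊗ₖ (Q + Y) + (P - X) ⊗ₖ (Q - Y) = (2 : ℕ) • (P ⊗ₖ Q + X ⊗ₖ Y) := by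
  ext
  simp only [add_apply, sub_apply, smul_apply, kroneckerMap_apply]
  noncomm_ring

end Matrix

open Matrix

def pauliDot (r : EuclideanSpace ℝ (Fin 3)) : Matrix (Fin 2) (Fin 2) ℂ :=
  ∑ j, (r j : ℂ) • pauli j

theorem qubitState_eq (r : EuclideanSpace ℝ (Fin 3)) :
    qubitState r = (1 / 2 : ℂ) • (1 + pauliDot r) :=
  rfl

theorem pauliDot_neg (r : EuclideanSpace ℝ (Fin 3)) : pauliDot (-r) = -pauliDot r := by
  simp [pauliDot, ← Finset.sum_neg_distrib]

theorem pauliDot_kronecker (r : EuclideanSpace ℝ (Fin 3)) (M : Matrix (Fin 2) (Fin 2) ℂ) :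
    pauliDot r ⊗ₖ M = ∑ j, (r j : ℂ) • (pauli j ⊗ₖ M) := by
  simp only [pauliDot, sum_kronecker, smul_kronecker]

theorem kronecker_pauliDot (M : Matrix (Fin 2) (Fin 2) ℂ) (r : EuclideanSpace ℝ (Fin 3)) :
    M ⊗ₖ pauliDot r = ∑ j, (r j : ℂ) • (M ⊗ₖ pauli j) := by
  simp only [pauliDot, kronecker_sum, kronecker_smul]

theorem pauliDot_kronecker_pauliDot (r s : EuclideanSpace ℝ (Fin 3)) :
    pauliDot r ⊗ₖ pauliDot s = ∑ j, ∑ k, ((r j * s k : ℝ) : ℂ) • (pauli j ⊗ₖ pauli k) := by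
  rw [pauliDot_kronecker]
  simp only [kronecker_pauliDot, Finset.smul_sum, smul_smul, Complex.ofReal_mul]

theorem qubitState_kronecker_add_neg (r s : EuclideanSpace ℝ (Fin 3)) :
    qubitState r ⊗ₖ qubitState s + qubitState (-r) ⊗ₖ qubitState (-s) =
      (1 / 2 : ℂ) • (1 ⊗ₖ 1 + pauliDot r ⊗ₖ pauliDot s) := by
  have h := add_kronecker_add_add_sub_kronecker_sub (1 : Matrix (Fin 2) (Fin 2) ℂ) (pauliDot r)
    1 (pauliDot s)
  simp only [qubitState_eq, pauliDot_neg, ← sub_eq_add_neg, smul_kronecker, kronecker_smul,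
    smul_smul, ← smul_add, h]
  module

theorem sum_smul_qubitState_kronecker_add_neg {ι : Type*} [Fintype ι] (S : ι → ℝ)
    (u v : ι → EuclideanSpace ℝ (Fin 3)) :
    ∑ l, ((S l / 2 : ℝ) : ℂ) •
        (qubitState (u l) ⊗ₖ qubitState (v l) + qubitState (-u l) ⊗ₖ qubitState (-v l)) =
      (1 / 4 : ℂ) • (((∑ l, S l : ℝ) : ℂ) • (1 ⊗ₖ 1)
        + ∑ l, (S l : ℂ) • (pauliDot (u l) ⊗ₖ pauliDot (v l))) := by
  simp only [Complex.ofReal_sum, Finset.sum_smul, Finset.smul_sum, ← smul_add,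
    ← Finset.sum_add_distrib]
  refine Finset.sum_congr rfl fun l _ => ?_
  rw [qubitState_kronecker_add_neg]
  push_cast
  module

theorem sum_smul_pauli_kronecker_pauli_of_svd {ι : Type*} [Fintype ι]
    (u v : ι → EuclideanSpace ℝ (Fin 3)) (S : ι → ℝ) (T : Matrix (Fin 3) (Fin 3) ℝ) (hT : ∀ j k, T j k = ∑ l, S l * u l j * v l k) :
    ∑ j, ∑ k, (T j k : ℂ) • (pauli j ⊗ₖ pauli k) =
      ∑ l, (S l : ℂ) • (pauliDot (u l) ⊗ₖ pauliDot (v l)) := by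
  simp only [hT, pauliDot_kronecker_pauliDot, Finset.smul_sum, smul_smul, Complex.ofReal_sum,
    Complex.ofReal_mul, Finset.sum_smul]
  calc _ = ∑ j, ∑ l, ∑ k, ((S l : ℂ) * (u l j * v l k)) • (pauli j ⊗ₖ pauli k) :=
        Finset.sum_congr rfl fun j _ => by rw [Finset.sum_comm]; simp only [mul_assoc]
    _ = _ := Finset.sum_comm

theorem stmt_10_general (a b : EuclideanSpace ℝ (Fin 3))
    (u v : Fin 3 → EuclideanSpace ℝ (Fin 3))
    (S : Fin 3 → ℝ)
    (T : Matrix (Fin 3) (Fin 3) ℝ)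
    (hT : ∀ j k, T j k = ∑ l, S l * u l j * v l k) :
    (1 / 4 : ℂ) • (((1 : Matrix (Fin 2) (Fin 2) ℂ) ⊗ₖ 1)
        + ∑ j, (a j : ℂ) • (pauli j ⊗ₖ 1)
        + ∑ j, (b j : ℂ) • ((1 : Matrix (Fin 2) (Fin 2) ℂ) ⊗ₖ pauli j)
        + ∑ j, ∑ k, (T j k : ℂ) • (pauli j ⊗ₖ pauli k))
      = (∑ j, ((S j / 2 : ℝ) : ℂ) •
            (qubitState (u j) ⊗ₖ qubitState (v j)
              + qubitState (-u j) ⊗ₖ qubitState (-v j)))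
        + ((1 / 2 : ℂ) • ((‖a‖ : ℂ) • (1 : Matrix (Fin 2) (Fin 2) ℂ)
              + ∑ j, (a j : ℂ) • pauli j))
            ⊗ₖ ((1 / 2 : ℂ) • (1 : Matrix (Fin 2) (Fin 2) ℂ))
        + ((1 / 2 : ℂ) • (1 : Matrix (Fin 2) (Fin 2) ℂ))
            ⊗ₖ ((1 / 2 : ℂ) • ((‖b‖ : ℂ) • (1 : Matrix (Fin 2) (Fin 2) ℂ)
              + ∑ j, (b j : ℂ) • pauli j))
        + ((1 - ‖a‖ - ‖b‖ - ∑ j, S j : ℝ) : ℂ) •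
            ((1 / 4 : ℂ) • ((1 : Matrix (Fin 2) (Fin 2) ℂ) ⊗ₖ 1)) := by
  rw [sum_smul_pauli_kronecker_pauli_of_svd u v S T hT, sum_smul_qubitState_kronecker_add_neg,
    ← pauliDot_kronecker, ← kronecker_pauliDot]
  change _ = _ + ((1 / 2 : ℂ) • ((‖a‖ : ℂ) • 1 + pauliDot a)) ⊗ₖ _
    + _ ⊗ₖ ((1 / 2 : ℂ) • ((‖b‖ : ℂ) • 1 + pauliDot b)) + _
  simp only [add_kronecker, kronecker_add, smul_kronecker, kronecker_smul]
  push_cast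
  module

/-- The Ben-Aryeh–Mann separable decomposition of a two-qubit density matrix `ρ(a,b,T)`
in terms of the singular value decomposition `T = Σⱼ Sⱼ ûⱼ v̂ⱼᵀ` of its correlation matrix. -/
theorem stmt_10 (a b : EuclideanSpace ℝ (Fin 3))
    (u v : Fin 3 → EuclideanSpace ℝ (Fin 3))
    (hu : ∀ j k, ⟪u j, u k⟫ = if j = k then (1 : ℝ) else 0)
    (hv : ∀ j k, ⟪v j, v k⟫ = if j = k then (1 : ℝ) else 0)
    (S : Fin 3 → ℝ) (hS : ∀ j, 0 ≤ S j)
    (T : Matrix (Fin 3) (Fin 3) ℝ)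
    (hT : ∀ j k, T j k = ∑ l, S l * u l j * v l k) :
    (1 / 4 : ℂ) • (((1 : Matrix (Fin 2) (Fin 2) ℂ) ⊗ₖ 1)
        + ∑ j, (a j : ℂ) • (pauli j ⊗ₖ 1)
        + ∑ j, (b j : ℂ) • ((1 : Matrix (Fin 2) (Fin 2) ℂ) ⊗ₖ pauli j)
        + ∑ j, ∑ k, (T j k : ℂ) • (pauli j ⊗ₖ pauli k))
      = (∑ j, ((S j / 2 : ℝ) : ℂ) •
            (qubitState (u j) ⊗ₖ qubitState (v j)
              + qubitState (-u j) ⊗ₖ qubitState (-v j)))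
        + ((1 / 2 : ℂ) • ((‖a‖ : ℂ) • (1 : Matrix (Fin 2) (Fin 2) ℂ)
              + ∑ j, (a j : ℂ) • pauli j))
            ⊗ₖ ((1 / 2 : ℂ) • (1 : Matrix (Fin 2) (Fin 2) ℂ))
        + ((1 / 2 : ℂ) • (1 : Matrix (Fin 2) (Fin 2) ℂ))
            ⊗ₖ ((1 / 2 : ℂ) • ((‖b‖ : ℂ) • (1 : Matrix (Fin 2) (Fin 2) ℂ)
              + ∑ j, (b j : ℂ) • pauli j))
        + ((1 - ‖a‖ - ‖b‖ - ∑ j, S j : ℝ) : ℂ) •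
            ((1 / 4 : ℂ) • ((1 : Matrix (Fin 2) (Fin 2) ℂ) ⊗ₖ 1)) :=
  stmt_10_general a b u v S T hT

end
end
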